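/- Fix 0 < q < 1 and 0 < p < 2, and define T_q*(η; p) = inf{ T_q(G) : G ∈ 𝒢_p(η) }. Then as η → 0+, T_q*(η; p) = p·( log(1/η) + log log log(1/η) ) + log((1−q)/q) + o(1). -/

import Mathlib

open MeasureTheory Filter Set
open scoped ENNReal

/-- `ℱ`: probability measures supported on `[1,∞)`. -/
def mixSet : Set (Measure ℝ) := {F | IsProbabilityMeasure F ∧ ∀ᵐ m ∂F, 1 ≤ m}

/-- The cdf of the scale mixture of exponentials `E#F`:
`G(t) = ∫ (1 − e^{−t/μ}) dF(μ)` for `t ≥ 0`, and `0` for `t < 0`. -/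
noncomputable def mixCdf (F : Measure ℝ) : ℝ → ℝ :=
  fun t => if 0 ≤ t then ∫ m, (1 - Real.exp (-t / m)) ∂F else 0

/-- The cdf of `Exp(1)`. -/
noncomputable def Ecdf : ℝ → ℝ := fun t => if 0 ≤ t then 1 - Real.exp (-t) else 0

/-- `𝒢`: the scale mixtures of exponentials. -/
def scaleMixtures : Set (ℝ → ℝ) := {G | ∃ F ∈ mixSet, G = mixCdf F}

/-- The FDR functional `T_q(G) = inf {t ≥ 0 : 1 − G(t) ≥ e^{−t}/q}` (`= ∞` if no such `t`),
valued in `ℝ≥0∞`. -/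
noncomputable def Tq (q : ℝ) (G : ℝ → ℝ) : ℝ≥0∞ :=
  sInf (ENNReal.ofReal '' {t : ℝ | 0 ≤ t ∧ Real.exp (-t) / q ≤ 1 - G t})

/-- `ℱ_p(η)`: members of `ℱ` with `∫ (log μ)^p dF ≤ η^p`. -/
def mixSetP (p η : ℝ) : Set (Measure ℝ) :=
  {F | F ∈ mixSet ∧ ∫⁻ m, ENNReal.ofReal ((Real.log m) ^ p) ∂F ≤ ENNReal.ofReal (η ^ p)}

/-- `T_q^*(η; p) = inf {T_q(G) : G ∈ 𝒢_p(η)}`. -/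
noncomputable def TqStar (q p η : ℝ) : ℝ≥0∞ :=
  ⨅ F ∈ mixSetP p η, Tq q (mixCdf F)

/-!
Write `x = log (1 / η)`, so that the moment budget is `η ^ p = e^{-p x}`.

Upper bound: put mass `ε = e^{-p x} / (log μ)^p` at `μ = x log x` and the rest at `1`. This law
spends exactly the budget, and since `ε e^t → e^δ (1 - q) / q` at `t = approxTqStar p q x + δ`
while `t / μ → 0`, the atom at `μ` pushes the survival function above `e^{-t} / q`.

Lower bound: for an admissible `F`, Markov's inequality gives `F (μ > e^s) ≤ η^p / s^p`. Cutting
the mixture at `e^{s₁}` and `e^{s₂}`, with `s₁ = x⁻²` and `e^{s₂} = x / (log x)²`, bounds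
`e^t (1 - G t)` by three terms which at `t = approxTqStar p q x - δ` tend to `1`, `0` and
`e^{-δ} (1 - q) / q`; their sum stays below `1 / q`, so no `t` below this value crosses.
-/

open Real Topology

section ScaleMixture

variable {F : Measure ℝ} {t : ℝ}

lemma integrable_exp_neg_div [IsFiniteMeasure F] (hF : ∀ᵐ m ∂F, 0 ≤ m) (ht : 0 ≤ t) :
    Integrable (fun m => exp (-t / m)) F := by
  refine (integrable_const (1 : ℝ)).mono' (by fun_prop) ?_
  filter_upwards [hF] with m hm
  rw [norm_of_nonneg (exp_pos _).le, exp_le_one_iff, neg_div, neg_nonpos]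
  positivity

lemma one_sub_mixCdf [IsProbabilityMeasure F] (hF : ∀ᵐ m ∂F, 0 ≤ m) (ht : 0 ≤ t) :
    1 - mixCdf F t = ∫ m, exp (-t / m) ∂F := by
  rw [mixCdf, if_pos ht, integral_sub (integrable_const 1) (integrable_exp_neg_div hF ht)]
  simp

lemma measure_exp_lt_le {p c s : ℝ} (hp : 0 < p) (hc : 0 ≤ c) (hs : 0 < s)
    (hF : ∫⁻ m, ENNReal.ofReal (log m ^ p) ∂F ≤ ENNReal.ofReal c) :
    (F {m | exp s < m}).toReal ≤ c / s ^ p := by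
  have hsp : 0 < s ^ p := rpow_pos_of_pos hs p
  have hsub : {m | exp s < m} ⊆ {m | ENNReal.ofReal (s ^ p) ≤ ENNReal.ofReal (log m ^ p)} :=
    fun m hm => ENNReal.ofReal_le_ofReal <|
      rpow_le_rpow hs.le ((lt_log_iff_exp_lt (exp_pos s |>.trans hm)).2 hm).le hp.le
  have hmarkov : ENNReal.ofReal (s ^ p) * F {m | exp s < m} ≤ ENNReal.ofReal c :=
    (mul_le_mul_right (measure_mono hsub) _).trans <|
      (mul_meas_ge_le_lintegral₀ (by fun_prop) _).trans hF
  refine ENNReal.toReal_le_of_le_ofReal (div_nonneg hc hsp.le) ?_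
  rwa [ENNReal.ofReal_div_of_pos hsp, ENNReal.le_div_iff_mul_le (by simp [hsp]) (by simp),
    mul_comm]

/-- On `(0, e^{s₁}]` use `1 / m ≥ 1 - log m ≥ 1 - s₁`. -/
lemma exp_neg_div_le_split {m : ℝ} (ht : 0 ≤ t) (hm : 0 < m) (s₁ s₂ : ℝ) :
    exp (-t / m) ≤ exp (t * s₁ - t) +
      {m | exp s₁ < m}.indicator (fun _ => exp (-t / exp s₂)) m +
      {m | exp s₂ < m}.indicator 1 m := by
  have h₁ : 0 ≤ {m | exp s₁ < m}.indicator (fun _ => exp (-t / exp s₂)) m :=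
    Set.indicator_nonneg (fun _ _ => (exp_pos _).le) m
  have h₂ : 0 ≤ {m | exp s₂ < m}.indicator (1 : ℝ → ℝ) m :=
    Set.indicator_nonneg (fun _ _ => zero_le_one) m
  have h₀ := (exp_pos (t * s₁ - t)).le
  rcases le_or_gt m (exp s₁) with hm₁ | hm₁
  · have hlog : log m ≤ s₁ := (log_le_iff_le_exp hm).2 hm₁
    have hinv : 1 - log m ≤ 1 / m := by
      have := add_one_le_exp (-log m)
      rw [exp_neg, exp_log hm] at this
      rw [one_div]; linarith
    have : -t / m ≤ t * s₁ - t := by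
      rw [neg_div, div_eq_mul_one_div]
      nlinarith [mul_le_mul_of_nonneg_left hinv ht, mul_le_mul_of_nonneg_left hlog ht]
    linarith [exp_le_exp.2 this]
  rcases le_or_gt m (exp s₂) with hm₂ | hm₂
  · have : exp (-t / m) ≤ exp (-t / exp s₂) := by
      rw [exp_le_exp, neg_div, neg_div, neg_le_neg_iff]
      exact div_le_div_of_nonneg_left ht hm hm₂
    rw [Set.indicator_of_mem (show m ∈ {m | exp s₁ < m} from hm₁)]
    linarith
  · have : exp (-t / m) ≤ 1 := by
      rw [exp_le_one_iff, neg_div, neg_nonpos]; positivity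
    rw [Set.indicator_of_mem (show m ∈ {m | exp s₂ < m} from hm₂), Pi.one_apply]
    linarith

lemma one_sub_mixCdf_le [IsProbabilityMeasure F] (hF : ∀ᵐ m ∂F, 0 < m) (ht : 0 ≤ t)
    (s₁ s₂ : ℝ) :
    1 - mixCdf F t ≤ exp (t * s₁ - t) + exp (-t / exp s₂) * (F {m | exp s₁ < m}).toReal +
      (F {m | exp s₂ < m}).toReal := by
  have hS₁ : MeasurableSet {m : ℝ | exp s₁ < m} := measurableSet_lt measurable_const measurable_id
  have hS₂ : MeasurableSet {m : ℝ | exp s₂ < m} := measurableSet_lt measurable_const measurable_id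
  rw [one_sub_mixCdf (hF.mono fun m hm => hm.le) ht]
  refine (integral_mono_ae (integrable_exp_neg_div (hF.mono fun m hm => hm.le) ht)
    (((integrable_const _).add ((integrable_const _).indicator hS₁)).add
      ((integrable_const _).indicator hS₂))
    (hF.mono fun m hm => exp_neg_div_le_split ht hm s₁ s₂)).trans_eq ?_
  simp only [Pi.add_apply]
  rw [integral_add ((integrable_const _).add ((integrable_const _).indicator hS₁))
      ((integrable_const _).indicator hS₂),
    integral_add (integrable_const _) ((integrable_const _).indicator hS₁),
    integral_indicator_const _ hS₁, Pi.one_def, integral_indicator_const _ hS₂]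
  simp [measureReal_def, mul_comm]

end ScaleMixture

section LowerBound

variable {p q T s₁ s₂ : ℝ}

lemma ofReal_le_Tq_mixCdf {F : Measure ℝ} [IsProbabilityMeasure F] {c₁ c₂ : ℝ}
    (hF : ∀ᵐ m ∂F, 0 < m) (hs₁ : 0 ≤ s₁) (hs₂ : 0 ≤ s₂)
    (hF₁ : (F {m | exp s₁ < m}).toReal ≤ c₁) (hF₂ : (F {m | exp s₂ < m}).toReal ≤ c₂)
    (hT : exp (T * s₁) + exp (T - T / exp s₂) * c₁ + exp T * c₂ < 1 / q) :
    ENNReal.ofReal T ≤ Tq q (mixCdf F) := by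
  refine le_sInf ?_
  rintro _ ⟨t, ⟨ht, hcross⟩, rfl⟩
  refine ENNReal.ofReal_le_ofReal (not_lt.1 fun htT => hcross.not_gt ?_)
  have hc₁ : 0 ≤ c₁ := ENNReal.toReal_nonneg.trans hF₁
  have hc₂ : 0 ≤ c₂ := ENNReal.toReal_nonneg.trans hF₂
  have hdamp : t - t / exp s₂ ≤ T - T / exp s₂ := by
    have : 1 / exp s₂ ≤ 1 := by rw [one_div]; exact inv_le_one_of_one_le₀ (one_le_exp hs₂)
    rw [div_eq_mul_one_div t, div_eq_mul_one_div T]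
    nlinarith
  have hbracket : exp (t * s₁) + exp (t - t / exp s₂) * c₁ + exp t * c₂ < 1 / q := by
    refine lt_of_le_of_lt ?_ hT
    gcongr
  calc 1 - mixCdf F t
      ≤ exp (t * s₁ - t) + exp (-t / exp s₂) * c₁ + c₂ := by
        refine (one_sub_mixCdf_le hF ht s₁ s₂).trans ?_
        gcongr
    _ = exp (-t) * (exp (t * s₁) + exp (t - t / exp s₂) * c₁ + exp t * c₂) := by
        rw [mul_add, mul_add, ← mul_assoc, ← mul_assoc, ← exp_add, ← exp_add, ← exp_add,
          neg_add_cancel, exp_zero, one_mul]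
        ring_nf
    _ < exp (-t) * (1 / q) := by gcongr
    _ = exp (-t) / q := mul_one_div _ _

lemma ofReal_le_TqStar {η : ℝ} (hp : 0 < p) (hη : 0 ≤ η) (hs₁ : 0 < s₁) (hs₂ : 0 < s₂)
    (hT : exp (T * s₁) + exp (T - T / exp s₂) * (η ^ p / s₁ ^ p) + exp T * (η ^ p / s₂ ^ p)
      < 1 / q) :
    ENNReal.ofReal T ≤ TqStar q p η := by
  refine le_iInf₂ fun F ⟨⟨_, hF⟩, hmoment⟩ => ?_
  have hηp : 0 ≤ η ^ p := rpow_nonneg hη p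
  exact ofReal_le_Tq_mixCdf (hF.mono fun m hm => one_pos.trans_le hm) hs₁.le hs₂.le
    (measure_exp_lt_le hp hηp hs₁ hmoment) (measure_exp_lt_le hp hηp hs₂ hmoment) hT

end LowerBound

section TwoPoint

noncomputable def twoPoint (ε μ : ℝ) : Measure ℝ :=
  ENNReal.ofReal (1 - ε) • Measure.dirac 1 + ENNReal.ofReal ε • Measure.dirac μ

variable {ε μ : ℝ}

lemma isProbabilityMeasure_twoPoint (h₀ : 0 ≤ ε) (h₁ : ε ≤ 1) :
    IsProbabilityMeasure (twoPoint ε μ) := by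
  constructor
  simp [twoPoint, ← ENNReal.ofReal_add (sub_nonneg.2 h₁) h₀]

lemma ae_one_le_twoPoint (hμ : 1 ≤ μ) : ∀ᵐ m ∂twoPoint ε μ, 1 ≤ m :=
  ae_add_measure_iff.2 ⟨Measure.ae_smul_measure ((ae_dirac_iff measurableSet_Ici).2 le_rfl) _,
    Measure.ae_smul_measure ((ae_dirac_iff measurableSet_Ici).2 hμ) _⟩

lemma twoPoint_mem_mixSetP {p η : ℝ} (hp : 0 < p) (h₀ : 0 ≤ ε) (h₁ : ε ≤ 1) (hμ : 1 ≤ μ)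
    (hmoment : ε * log μ ^ p ≤ η ^ p) : twoPoint ε μ ∈ mixSetP p η := by
  refine ⟨⟨isProbabilityMeasure_twoPoint h₀ h₁, ae_one_le_twoPoint hμ⟩, ?_⟩
  simp only [twoPoint, lintegral_add_measure, lintegral_smul_measure, lintegral_dirac, log_one,
    zero_rpow hp.ne', ENNReal.ofReal_zero, mul_zero, zero_add, smul_eq_mul,
    ← ENNReal.ofReal_mul h₀]
  exact ENNReal.ofReal_le_ofReal hmoment

lemma one_sub_mixCdf_twoPoint {t : ℝ} (h₀ : 0 ≤ ε) (h₁ : ε ≤ 1) (hμ : 1 ≤ μ) (ht : 0 ≤ t) :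
    1 - mixCdf (twoPoint ε μ) t = (1 - ε) * exp (-t) + ε * exp (-t / μ) := by
  have := isProbabilityMeasure_twoPoint (μ := μ) h₀ h₁
  have hF : ∀ᵐ m ∂twoPoint ε μ, 0 ≤ m :=
    (ae_one_le_twoPoint hμ).mono fun m hm => zero_le_one.trans hm
  have hint := integrable_exp_neg_div hF ht
  rw [twoPoint, integrable_add_measure] at hint
  rw [one_sub_mixCdf hF ht, twoPoint, integral_add_measure hint.1 hint.2, integral_smul_measure,
    integral_smul_measure, integral_dirac, integral_dirac, ENNReal.toReal_ofReal (sub_nonneg.2 h₁),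
    ENNReal.toReal_ofReal h₀, div_one, smul_eq_mul, smul_eq_mul]

lemma TqStar_le_of_twoPoint {p q η t : ℝ} (hp : 0 < p) (hq : q ≠ 0) (h₀ : 0 ≤ ε) (h₁ : ε ≤ 1)
    (hμ : 1 ≤ μ) (hmoment : ε * log μ ^ p ≤ η ^ p) (ht : 0 ≤ t)
    (hgain : (1 - q) / q + ε ≤ ε * exp (t - t / μ)) :
    TqStar q p η ≤ ENNReal.ofReal t := by
  refine (iInf₂_le _ (twoPoint_mem_mixSetP hp h₀ h₁ hμ hmoment)).trans
    (sInf_le ⟨t, ⟨ht, ?_⟩, rfl⟩)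
  rw [one_sub_mixCdf_twoPoint h₀ h₁ hμ ht]
  have hsplit : exp (-t) / q = exp (-t) + (1 - q) / q * exp (-t) := by field_simp; ring
  have hdecay : exp (t - t / μ) * exp (-t) = exp (-t / μ) := by rw [← exp_add]; ring_nf
  nlinarith [mul_le_mul_of_nonneg_right hgain (exp_pos (-t)).le]

end TwoPoint

section Asymptotics

lemma tendsto_log_log_div_log : Tendsto (fun x => log (log x) / log x) atTop (𝓝 0) :=
  isLittleO_log_id_atTop.tendsto_div_nhds_zero.comp tendsto_log_atTop

lemma tendsto_log_div_log_add_mul_log_log (c : ℝ) :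
    Tendsto (fun x => log x / (log x + c * log (log x))) atTop (𝓝 1) := by
  have h := ((tendsto_log_log_div_log.const_mul c).const_add 1).inv₀ (by simp)
  rw [mul_zero, add_zero, inv_one] at h
  refine h.congr' ?_
  filter_upwards [tendsto_log_atTop.eventually_gt_atTop 0] with x hx
  field_simp

lemma eventually_pos_of_tendsto_log_div {g : ℝ → ℝ}
    (hg : Tendsto (fun x => log x / g x) atTop (𝓝 1)) : ∀ᶠ x in atTop, 0 < g x := by
  filter_upwards [hg.eventually_const_lt one_pos, tendsto_log_atTop.eventually_gt_atTop 0]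
    with x hratio hlog
  exact (div_pos_iff_of_pos_left hlog).1 hratio

lemma tendsto_exp_mul_log_log_div_rpow {g : ℝ → ℝ} (p c : ℝ)
    (hg : Tendsto (fun x => log x / g x) atTop (𝓝 1)) :
    Tendsto (fun x => exp (p * log (log x) + c) / g x ^ p) atTop (𝓝 (exp c)) := by
  have h := ((continuousAt_rpow_const 1 p (Or.inl one_ne_zero)).tendsto.comp hg).const_mul
    (exp c)
  rw [one_rpow, mul_one] at h
  refine h.congr' ?_
  filter_upwards [eventually_pos_of_tendsto_log_div hg,
    tendsto_log_atTop.eventually_gt_atTop 0] with x hgx hlog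
  rw [Function.comp_apply, div_rpow hlog.le hgx.le, exp_add, mul_comm p, exp_mul, exp_log hlog]
  ring

lemma tendsto_add_mul_sub_mul_atBot {b : ℝ} (hb : 0 < b) (K a : ℝ) :
    Tendsto (fun y => K + y * (a - b * y)) atTop atBot := by
  have hlin : Tendsto (fun y => a - b * y) atTop atBot := by
    simpa only [sub_eq_add_neg, Function.comp_def, id] using tendsto_atBot_add_const_left _ a
      (tendsto_neg_atTop_atBot.comp (tendsto_id.const_mul_atTop hb))
  exact tendsto_atBot_add_const_left _ K (tendsto_id.atTop_mul_atBot₀ hlin)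

lemma exp_neg_rpow (x p : ℝ) : exp (-x) ^ p = exp (-(p * x)) := by
  rw [← exp_mul]; ring_nf

lemma exp_neg_two_mul_log {x : ℝ} (hx : 0 < x) : exp (-2 * log x) = x⁻¹ * x⁻¹ := by
  rw [show -2 * log x = -log x + -log x by ring, exp_add, exp_neg, exp_log hx]

lemma exp_neg_log_add_two_mul_log_log {x : ℝ} (hx : 0 < x) (hlog : 0 < log x) :
    exp (-(log x + -2 * log (log x))) = log x ^ 2 * x⁻¹ := by
  rw [show -(log x + -2 * log (log x)) = log (log x ^ 2) + -log x by rw [log_pow]; push_cast; ring,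
    exp_add, exp_log (by positivity), exp_neg, exp_log hx]

lemma eventually_log_mul_log_eq :
    ∀ᶠ x in atTop, log (x * log x) = log x + log (log x) := by
  filter_upwards [eventually_gt_atTop 0, tendsto_log_atTop.eventually_gt_atTop 0] with x hx hlog
  rw [log_mul hx.ne' hlog.ne']

lemma tendsto_log_mul_log_atTop : Tendsto (fun x => log (x * log x)) atTop atTop := by
  refine tendsto_atTop_mono' _ ?_ tendsto_log_atTop
  filter_upwards [eventually_log_mul_log_eq, tendsto_log_atTop.eventually_ge_atTop 1]
    with x hx hlog
  rw [hx]
  linarith [log_nonneg hlog]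

/-- The expansion of `T_q^*(η; p)` in the variable `x = log (1 / η)`. -/
noncomputable def approxTqStar (p q x : ℝ) : ℝ := p * (x + log (log x)) + log ((1 - q) / q)

lemma approxTqStar_sub_mul (p q x : ℝ) :
    approxTqStar p q x - p * x = p * log (log x) + log ((1 - q) / q) := by
  rw [approxTqStar]; ring

lemma tendsto_approxTqStar_add_div (p q c : ℝ) :
    Tendsto (fun x => (approxTqStar p q x + c) / x) atTop (𝓝 p) := by
  have hloglog : Tendsto (fun x => log (log x) / x) atTop (𝓝 0) := by
    have := tendsto_log_log_div_log.mul isLittleO_log_id_atTop.tendsto_div_nhds_zero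
    rw [mul_zero] at this
    refine this.congr' ?_
    filter_upwards [tendsto_log_atTop.eventually_gt_atTop 0] with x hx
    simp only [id]
    field_simp
  have h := ((hloglog.const_mul p).const_add p).add
    (tendsto_const_nhds (x := log ((1 - q) / q) + c) |>.div_atTop tendsto_id)
  rw [mul_zero, add_zero, add_zero] at h
  refine h.congr' ?_
  filter_upwards [eventually_gt_atTop 0] with x hx
  simp only [approxTqStar, id]
  field_simp
  ring

lemma eventually_approxTqStar_add_pos {p : ℝ} (hp : 0 < p) (q c : ℝ) :
    ∀ᶠ x in atTop, 0 < approxTqStar p q x + c := by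
  filter_upwards [(tendsto_approxTqStar_add_div p q c).eventually_const_lt hp,
    eventually_gt_atTop 0] with x hratio hx
  exact (div_pos_iff_of_pos_right hx).1 hratio

end Asymptotics

section UpperBound

lemma tendsto_twoPoint_gain (p q δ : ℝ) :
    Tendsto (fun x => exp (-(p * x)) / log (x * log x) ^ p *
        exp (approxTqStar p q x + δ - (approxTqStar p q x + δ) / (x * log x)))
      atTop (𝓝 (exp (log ((1 - q) / q) + δ))) := by
  have hmain := tendsto_exp_mul_log_log_div_rpow (g := fun x => log (x * log x)) p
    (log ((1 - q) / q) + δ) ((tendsto_log_div_log_add_mul_log_log 1).congr' <|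
      eventually_log_mul_log_eq.mono fun x hx => by simp only [hx, one_mul])
  have hsmall : Tendsto (fun x => (approxTqStar p q x + δ) / (x * log x)) atTop (𝓝 0) := by
    have := (tendsto_approxTqStar_add_div p q δ).mul tendsto_log_atTop.inv_tendsto_atTop
    rw [mul_zero] at this
    refine this.congr' (Eventually.of_forall fun x => ?_)
    simp only [Pi.inv_apply, div_eq_mul_inv, mul_inv, mul_assoc]
  have h := hmain.mul ((continuous_exp.tendsto _).comp hsmall.neg)
  rw [neg_zero, Function.comp_def, exp_zero, mul_one] at h
  refine h.congr' (Eventually.of_forall fun x => ?_)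
  dsimp only
  rw [div_mul_eq_mul_div, div_mul_eq_mul_div, ← exp_add, ← exp_add]
  congr 2
  linear_combination -approxTqStar_sub_mul p q x

lemma eventually_TqStar_exp_neg_le {p q : ℝ} (hp : 0 < p) (hq : 0 < q) (hq1 : q < 1) {δ : ℝ}
    (hδ : 0 < δ) :
    ∀ᶠ x in atTop, TqStar q p (exp (-x)) ≤ ENNReal.ofReal (approxTqStar p q x + δ) := by
  have hweight : Tendsto (fun x => exp (-(p * x)) / log (x * log x) ^ p) atTop (𝓝 0) :=
    (tendsto_exp_atBot.comp (tendsto_neg_atTop_atBot.comp (tendsto_id.const_mul_atTop hp)))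
      |>.div_atTop ((tendsto_rpow_atTop hp).comp tendsto_log_mul_log_atTop)
  have hQ : 0 < (1 - q) / q := div_pos (sub_pos.2 hq1) hq
  have hgap : (1 - q) / q + 0 < exp (log ((1 - q) / q) + δ) := by
    rw [add_zero, exp_add, exp_log hQ]
    exact lt_mul_of_one_lt_right hQ (one_lt_exp_iff.2 hδ)
  filter_upwards [(tendsto_const_nhds.add hweight).eventually_lt (tendsto_twoPoint_gain p q δ) hgap,
    hweight.eventually_le_const one_pos, eventually_gt_atTop 1,
    tendsto_log_atTop.eventually_ge_atTop 1, eventually_approxTqStar_add_pos hp q δ]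
    with x hgain hle hx hlog ht
  have hμ : 1 < x * log x := by nlinarith
  have hlogμ : 0 < log (x * log x) ^ p := rpow_pos_of_pos (log_pos hμ) p
  refine TqStar_le_of_twoPoint hp hq.ne' (by positivity) hle hμ.le ?_ ht.le (by linarith)
  rw [div_mul_cancel₀ _ hlogμ.ne', exp_neg_rpow]

end UpperBound

section LowerBoundAsymptotics

lemma tendsto_bulk_term (p q c : ℝ) :
    Tendsto (fun x => exp ((approxTqStar p q x + c) * exp (-2 * log x))) atTop (𝓝 1) := by
  have h := (tendsto_approxTqStar_add_div p q c).mul tendsto_inv_atTop_zero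
  rw [mul_zero] at h
  have h' := (continuous_exp.tendsto _).comp h
  rw [exp_zero] at h'
  refine h'.congr' ?_
  filter_upwards [eventually_gt_atTop 0] with x hx
  rw [Function.comp_apply, exp_neg_two_mul_log hx, div_eq_mul_inv, mul_assoc]

/-- The damping `exp (-T / e^{s₂}) ≈ exp (-p (log x)²)` beats the Markov factor
`η^p / s₁^p = e^{-p x} x^{2p}`. -/
lemma tendsto_middle_term {p : ℝ} (hp : 0 < p) (q c : ℝ) :
    Tendsto (fun x => exp (approxTqStar p q x + c -
        (approxTqStar p q x + c) / exp (log x + -2 * log (log x))) *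
        (exp (-(p * x)) / exp (-2 * log x) ^ p)) atTop (𝓝 0) := by
  have hexponent : Tendsto (fun x => p * log (log x) + (log ((1 - q) / q) + c) + 2 * p * log x -
      (approxTqStar p q x + c) / x * log x ^ 2) atTop atBot := by
    refine tendsto_atBot_mono' _ ?_ ((tendsto_add_mul_sub_mul_atBot (half_pos hp)
      (log ((1 - q) / q) + c) (3 * p)).comp tendsto_log_atTop)
    filter_upwards [(tendsto_approxTqStar_add_div p q c).eventually_const_le (half_lt_self hp),
      tendsto_log_atTop.eventually_ge_atTop 0] with x hT hlog
    rw [Function.comp_apply]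
    nlinarith [mul_le_mul_of_nonneg_left (log_le_self hlog) hp.le,
      mul_le_mul_of_nonneg_right hT (sq_nonneg (log x))]
  refine (tendsto_exp_atBot.comp hexponent).congr' ?_
  filter_upwards [eventually_gt_atTop 0, tendsto_log_atTop.eventually_gt_atTop 0]
    with x hx hlog
  rw [Function.comp_apply, div_eq_mul_inv _ (exp _), ← exp_neg,
    exp_neg_log_add_two_mul_log_log hx hlog, ← exp_mul, div_eq_mul_inv (exp _), ← exp_neg,
    ← exp_add, ← exp_add]
  congr 1
  field_simp
  linear_combination (-x) * approxTqStar_sub_mul p q x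

lemma tendsto_tail_term (p q c : ℝ) :
    Tendsto (fun x => exp (approxTqStar p q x + c) *
        (exp (-(p * x)) / (log x + -2 * log (log x)) ^ p))
      atTop (𝓝 (exp (log ((1 - q) / q) + c))) := by
  refine (tendsto_exp_mul_log_log_div_rpow p _ (tendsto_log_div_log_add_mul_log_log (-2))).congr
    fun x => ?_
  rw [← mul_div_assoc, ← exp_add]
  congr 2
  linear_combination -approxTqStar_sub_mul p q x

lemma eventually_ofReal_le_TqStar_exp_neg {p q : ℝ} (hp : 0 < p) (hq : 0 < q) (hq1 : q < 1) {δ : ℝ}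
    (hδ : 0 < δ) :
    ∀ᶠ x in atTop, ENNReal.ofReal (approxTqStar p q x - δ) ≤ TqStar q p (exp (-x)) := by
  have hsum := ((tendsto_bulk_term p q (-δ)).add (tendsto_middle_term hp q (-δ))).add
    (tendsto_tail_term p q (-δ))
  have hQ : 0 < (1 - q) / q := div_pos (sub_pos.2 hq1) hq
  have hgap : 1 + 0 + exp (log ((1 - q) / q) + -δ) < 1 / q := by
    rw [add_zero, exp_add, exp_log hQ]
    calc 1 + (1 - q) / q * exp (-δ) < 1 + (1 - q) / q * 1 := by
          gcongr
          exact exp_lt_one_iff.2 (neg_lt_zero.2 hδ)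
      _ = 1 / q := by field_simp; ring
  filter_upwards [hsum.eventually_lt_const hgap,
    eventually_pos_of_tendsto_log_div (tendsto_log_div_log_add_mul_log_log (-2))] with x hx hs₂
  rw [sub_eq_add_neg]
  refine ofReal_le_TqStar hp (exp_pos _).le (exp_pos (-2 * log x)) hs₂ ?_
  rwa [exp_neg_rpow]

end LowerBoundAsymptotics

lemma tendsto_TqStar_exp_neg_sub_approxTqStar {p q : ℝ} (hp : 0 < p) (hq : 0 < q)
    (hq1 : q < 1) :
    Tendsto (fun x => (TqStar q p (exp (-x))).toReal - approxTqStar p q x) atTop (𝓝 0) := by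
  rw [Metric.tendsto_nhds]
  intro δ hδ
  filter_upwards [eventually_TqStar_exp_neg_le hp hq hq1 (half_pos hδ),
    eventually_ofReal_le_TqStar_exp_neg hp hq hq1 (half_pos hδ),
    eventually_approxTqStar_add_pos hp q (δ / 2)] with x hupper hlower hpos
  have hfinite : TqStar q p (exp (-x)) ≠ ⊤ := ne_top_of_le_ne_top ENNReal.ofReal_ne_top hupper
  have h₁ := ENNReal.toReal_le_of_le_ofReal hpos.le hupper
  have h₂ := (ENNReal.ofReal_le_iff_le_toReal hfinite).1 hlower
  rw [dist_zero_right, norm_eq_abs, abs_lt]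
  constructor <;> linarith

theorem TqStar_asymptotics_general (p q : ℝ) (hp : 0 < p) (hq : 0 < q) (hq1 : q < 1) :
    Tendsto (fun η : ℝ =>
        (TqStar q p η).toReal -
          (p * (Real.log (1 / η) + Real.log (Real.log (Real.log (1 / η)))) +
            Real.log ((1 - q) / q)))
      (nhdsWithin 0 (Set.Ioi 0)) (nhds 0) := by
  have hx : Tendsto (fun η : ℝ => log (1 / η)) (𝓝[>] 0) atTop := by
    simpa only [one_div, Function.comp_def] using tendsto_log_atTop.comp tendsto_inv_nhdsGT_zero
  refine ((tendsto_TqStar_exp_neg_sub_approxTqStar hp hq hq1).comp hx).congr' ?_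
  filter_upwards [self_mem_nhdsWithin] with η hη
  have hη' : exp (-log (1 / η)) = η := by rw [one_div, log_inv, neg_neg, exp_log hη]
  rw [Function.comp_apply, hη']
  rfl

/-- Lemma 5.2: as `η → 0+`,
`T_q^*(η;p) = p (log(1/η) + log log log(1/η)) + log((1−q)/q) + o(1)`. -/
theorem TqStar_asymptotics (p q : ℝ) (hp : 0 < p) (hp2 : p < 2) (hq : 0 < q) (hq1 : q < 1) :
    Tendsto (fun η : ℝ =>
        (TqStar q p η).toReal -
          (p * (Real.log (1 / η) + Real.log (Real.log (Real.log (1 / η)))) +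
            Real.log ((1 - q) / q)))
      (nhdsWithin 0 (Set.Ioi 0)) (nhds 0) :=
  TqStar_asymptotics_general p q hp hq hq1
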